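/- Let σ : G ⇢ L be a regular support, r = rk(L), and let C ⊆ G be a code. Then for every integer 0 ≤ s ≤ r, Σ_{i=0}^{s} W_i(C, ω_σ) · μ_≥(s, i) = (|C| / γ_{σ*}(r − s)) · Σ_{j=0}^{r−s} W_j(C*, ω_{σ*}) · μ_≤(s, r − j). -/

import Mathlib

open Finset
open scoped Classical Pointwise

/-- A finite graded lattice of rank `r` (with rank function `ρ`) that is *regular*:
the counting numbers `μ_≤`, `μ_≥` and the Möbius numbers `μ_L` depend only on ranks. -/
structure RegularLattice (L : Type*) [Lattice L] [BoundedOrder L] [Fintype L] where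
  /-- the rank of the lattice -/
  r : ℕ
  /-- the rank function -/
  ρ : L → ℕ
  ρ_bot : ρ ⊥ = 0
  ρ_top : ρ ⊤ = r
  ρ_covby : ∀ S T : L, S ⋖ T → ρ T = ρ S + 1
  /-- the Möbius function of the lattice -/
  mu : L → L → ℤ
  mu_self : ∀ S : L, mu S S = 1
  mu_sum : ∀ S T : L, S < T → mu S T = - ∑ U : L, (if S ≤ U ∧ U < T then mu S U else 0)
  /-- `μ_≤ s t` : the number of elements of rank `s` below an element of rank `t` -/
  muLE : ℕ → ℕ → ℕ
  card_le : ∀ (s : ℕ) (T : L), Nat.card {S : L // ρ S = s ∧ S ≤ T} = muLE s (ρ T)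
  /-- `μ_≥ s t` : the number of elements of rank `s` above an element of rank `t` -/
  muGE : ℕ → ℕ → ℕ
  card_ge : ∀ (s : ℕ) (T : L), Nat.card {S : L // ρ S = s ∧ T ≤ S} = muGE s (ρ T)
  /-- `μ_L s t` : the common value of the Möbius function on pairs of ranks `s ≤ t`,
  with the convention `μ_L s t = 0` for `s > t` -/
  muN : ℕ → ℕ → ℤ
  mu_eq : ∀ S T : L, S ≤ T → mu S T = muN (ρ S) (ρ T)
  muN_zero : ∀ s t : ℕ, t < s → muN s t = 0

/-- A regular support `σ : G ⇢ L` on a finite abelian group `G` with values in a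
regular lattice `L`, together with its cardinality invariant `γ`. -/
structure RegularSupport (L : Type*) [Lattice L] [BoundedOrder L] [Fintype L]
    (G : Type*) [AddCommGroup G] [Fintype G] (RL : RegularLattice L) where
  /-- the support function -/
  σ : G → L
  supp_zero : ∀ g : G, σ g = ⊥ ↔ g = 0
  supp_neg : ∀ g : G, σ (-g) = σ g
  supp_add : ∀ g₁ g₂ : G, σ (g₁ + g₂) ≤ σ g₁ ⊔ σ g₂
  supp_sup : ∀ S₁ S₂ : L,
    {g : G | σ g ≤ S₁ ⊔ S₂} = {g : G | σ g ≤ S₁} + {g : G | σ g ≤ S₂}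
  /-- `γ s` : the common cardinality of `G_σ(S)` over elements `S` of rank `s` -/
  γ : ℕ → ℕ
  card_supp : ∀ S : L, Nat.card {g : G // σ g ≤ S} = γ (RL.ρ S)

/-- The dual support `σ* : Ĝ → L`, `σ*(χ) = ⋁ {S ∈ L : χ ∈ G_σ(S)*}`. -/
noncomputable def RegularSupport.dualSupp {L : Type*} [Lattice L] [BoundedOrder L] [Fintype L]
    {G : Type*} [AddCommGroup G] [Fintype G] {RL : RegularLattice L}
    (RS : RegularSupport L G RL) (χ : AddChar G ℂˣ) : L :=
  (Finset.univ.filter (fun S : L => ∀ g : G, RS.σ g ≤ S → χ g = 1)).sup id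

/-!
For `H = G_σ(T)`, character duality of finite abelian groups gives
`|C ∩ H| · |H^⊥| = |C| · |C^⊥ ∩ H^⊥|`, since `|H^⊥| = [G : H]`, `C^⊥ ∩ H^⊥ = (C + H)^⊥` and
`|C ∩ H| · |C + H| = |C| · |H|`. Since `H^⊥ = {χ : T ≤ σ*(χ)}` and `|G_σ(T)|` depends only on
`ρ(T)`, the factor `|H^⊥|` is the same for all `T` of rank `s`. Summing over these `T`, a
codeword `g` is counted `μ_≥(s, ω_σ(g))` times on the left and a dual codeword `χ` is counted
`μ_≤(s, r − ω_{σ*}(χ))` times on the right.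
-/

theorem Finset.sum_range_card_filter_mul {α : Type*} (s : Finset α) (w : α → ℕ) (c : ℕ → ℕ)
    {n : ℕ} (h : ∀ x ∈ s, c (w x) ≠ 0 → w x ≤ n) :
    ∑ i ∈ range (n + 1), #{x ∈ s | w x = i} * c i = ∑ x ∈ s, c (w x) := by
  calc ∑ i ∈ range (n + 1), #{x ∈ s | w x = i} * c i
      = ∑ i ∈ range (n + 1), ∑ x ∈ s with w x = i, c i := by simp only [sum_const, smul_eq_mul]
    _ = ∑ x ∈ s with w x ∈ range (n + 1), c (w x) := sum_fiberwise_eq_sum_filter' _ _ _ _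
    _ = ∑ x ∈ s, c (w x) := sum_filter_of_ne fun x hx hc => mem_range_succ_iff.mpr (h x hx hc)

theorem Finset.sum_card_filter_and_comm {α β : Type*} [Fintype α] [Fintype β]
    (p : α → Prop) (q : β → Prop) (r : β → α → Prop)
    [DecidablePred p] [DecidablePred q] [∀ b a, Decidable (r b a)] :
    ∑ b with q b, #{a | p a ∧ r b a} = ∑ a with p a, #{b | q b ∧ r b a} := by
  simpa only [bipartiteAbove, bipartiteBelow, filter_filter] using
    sum_card_bipartiteAbove_eq_sum_card_bipartiteBelow r (s := {b | q b}) (t := {a | p a})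

theorem AddSubgroup.card_inf_mul_index_eq {G : Type*} [AddCommGroup G] (C H : AddSubgroup G) :
    Nat.card ↥(C ⊓ H) * H.index = Nat.card C * (C ⊔ H).index := by
  rw [← relIndex_mul_index (le_sup_right : H ≤ C ⊔ H), relIndex_sup_right, ← mul_assoc,
    ← inf_relIndex_right, inf_comm, ← relIndex_bot_left, ← relIndex_bot_left,
    relIndex_mul_relIndex ⊥ (H ⊓ C) C bot_le inf_le_right]

namespace RegularLattice

variable {L : Type*} [Lattice L] [BoundedOrder L] [Fintype L] (RL : RegularLattice L)

theorem strictMono_ρ : StrictMono RL.ρ := by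
  let := Fintype.toLocallyFiniteOrder (α := L)
  exact (strictMono_iff_forall_covBy _).mpr fun S T h => by rw [RL.ρ_covby S T h]; omega

theorem ρ_le_r (T : L) : RL.ρ T ≤ RL.r :=
  RL.ρ_top ▸ RL.strictMono_ρ.monotone le_top

theorem muGE_eq_zero_of_lt {s : ℕ} {T : L} (h : s < RL.ρ T) : RL.muGE s (RL.ρ T) = 0 := by
  rw [← RL.card_ge, Nat.card_eq_zero]
  exact Or.inl ⟨fun ⟨U, hU, hTU⟩ => (hU ▸ h).not_ge (RL.strictMono_ρ.monotone hTU)⟩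

theorem muLE_eq_zero_of_lt {s : ℕ} {T : L} (h : RL.ρ T < s) : RL.muLE s (RL.ρ T) = 0 := by
  rw [← RL.card_le, Nat.card_eq_zero]
  exact Or.inl ⟨fun ⟨U, hU, hUT⟩ => (hU ▸ h).not_ge (RL.strictMono_ρ.monotone hUT)⟩

variable {α : Type*} [Fintype α] (p : α → Prop) (f : α → L) (s : ℕ)

theorem sum_card_le_eq_sum_muGE :
    ∑ T with RL.ρ T = s, #{x | p x ∧ f x ≤ T} = ∑ x with p x, RL.muGE s (RL.ρ (f x)) := by
  rw [sum_card_filter_and_comm p (RL.ρ · = s) (fun T x => f x ≤ T)]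
  refine sum_congr rfl fun x _ => ?_
  rw [← RL.card_ge, Nat.card_eq_fintype_card, Fintype.card_subtype]

theorem sum_card_ge_eq_sum_muLE :
    ∑ T with RL.ρ T = s, #{x | p x ∧ T ≤ f x} = ∑ x with p x, RL.muLE s (RL.ρ (f x)) := by
  rw [sum_card_filter_and_comm p (RL.ρ · = s) (fun T x => T ≤ f x)]
  refine sum_congr rfl fun x _ => ?_
  rw [← RL.card_le, Nat.card_eq_fintype_card, Fintype.card_subtype]

theorem sum_range_card_mul_muGE :
    ∑ i ∈ range (s + 1), Nat.card {x // p x ∧ RL.ρ (f x) = i} * RL.muGE s i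
      = ∑ T with RL.ρ T = s, Nat.card {x // p x ∧ f x ≤ T} := by
  simp only [Nat.card_eq_fintype_card, Fintype.card_subtype]
  rw [RL.sum_card_le_eq_sum_muGE, ← sum_range_card_filter_mul (n := s)]
  · simp only [filter_filter]
  · intro x _ hx
    by_contra! hlt
    exact hx (RL.muGE_eq_zero_of_lt hlt)

theorem sum_range_card_mul_muLE :
    ∑ j ∈ range (RL.r - s + 1),
        Nat.card {x // p x ∧ RL.r - RL.ρ (f x) = j} * RL.muLE s (RL.r - j)
      = ∑ T with RL.ρ T = s, Nat.card {x // p x ∧ T ≤ f x} := by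
  simp only [Nat.card_eq_fintype_card, Fintype.card_subtype]
  have hw (x : α) : RL.r - (RL.r - RL.ρ (f x)) = RL.ρ (f x) := Nat.sub_sub_self (RL.ρ_le_r _)
  rw [RL.sum_card_ge_eq_sum_muLE, ← sum_congr rfl fun x _ => congrArg (RL.muLE s) (hw x),
    ← sum_range_card_filter_mul (n := RL.r - s) _ (fun x => RL.r - RL.ρ (f x))
      (fun j => RL.muLE s (RL.r - j))]
  · simp only [filter_filter]
  · intro x _ hx
    rw [hw] at hx
    have := RL.ρ_le_r (f x)
    by_contra! hlt
    exact hx (RL.muLE_eq_zero_of_lt (by omega))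

end RegularLattice

namespace AddChar

variable {G : Type*} [AddCommGroup G]

instance instFiniteUnitsComplex [Finite G] : Finite (AddChar G ℂˣ) :=
  Finite.of_injective _ ((Units.coeHom ℂ).compAddChar_injective_right Units.val_injective)

theorem card_annihilator [Finite G] (H : AddSubgroup G) :
    Nat.card {χ : AddChar G ℂˣ // ∀ h ∈ H, χ h = 1} = H.index := by
  have : NeZero (Monoid.exponent (Multiplicative G)) := Monoid.neZero_exponent_of_finite
  rw [← H.index_toSubgroup, Subgroup.index_eq_card,
    ← CommGroup.card_domRestrictHom_ker ℂ H.toSubgroup]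
  refine Nat.card_congr (toMonoidHomEquiv.subtypeEquiv fun χ => ?_)
  simp [MonoidHom.mem_ker, MonoidHom.ext_iff]

theorem forall_mem_sup_eq_one_iff (χ : AddChar G ℂˣ) (C H : AddSubgroup G) :
    (∀ x ∈ C ⊔ H, χ x = 1) ↔ (∀ x ∈ C, χ x = 1) ∧ ∀ x ∈ H, χ x = 1 := by
  refine ⟨fun h => ⟨fun x hx => h x (AddSubgroup.mem_sup_left hx),
    fun x hx => h x (AddSubgroup.mem_sup_right hx)⟩, ?_⟩
  rintro ⟨hC, hH⟩ x hx
  obtain ⟨y, hy, z, hz, rfl⟩ := AddSubgroup.mem_sup.mp hx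
  rw [map_add_eq_mul, hC y hy, hH z hz, mul_one]

theorem card_inf_mul_card_annihilator [Finite G] (C H : AddSubgroup G) :
    Nat.card ↥(C ⊓ H) * Nat.card {χ : AddChar G ℂˣ // ∀ h ∈ H, χ h = 1}
      = Nat.card C * Nat.card {χ : AddChar G ℂˣ // (∀ g ∈ C, χ g = 1) ∧ ∀ h ∈ H, χ h = 1} := by
  rw [← Nat.card_congr (Equiv.subtypeEquivRight fun χ => forall_mem_sup_eq_one_iff χ C H),
    card_annihilator, card_annihilator, C.card_inf_mul_index_eq]

end AddChar

namespace RegularSupport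

variable {L : Type*} [Lattice L] [BoundedOrder L] [Fintype L]
  {G : Type*} [AddCommGroup G] [Fintype G] {RL : RegularLattice L} (RS : RegularSupport L G RL)

def suppSubgroup (T : L) : AddSubgroup G where
  carrier := {g | RS.σ g ≤ T}
  zero_mem' := ((RS.supp_zero 0).mpr rfl).trans_le bot_le
  add_mem' ha hb := (RS.supp_add _ _).trans (sup_le ha hb)
  neg_mem' ha := (RS.supp_neg _).trans_le ha

theorem card_suppSubgroup (T : L) : Nat.card (RS.suppSubgroup T) = RS.γ (RL.ρ T) :=
  RS.card_supp T

-- By (D), the `S` with `χ` trivial on `G_σ(S)` are closed under `⊔`; so `χ` is trivial on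
-- `G_σ(σ*(χ))` itself.
theorem eq_one_of_σ_le_dualSupp (χ : AddChar G ℂˣ) {g : G} (hg : RS.σ g ≤ RS.dualSupp χ) :
    χ g = 1 := by
  refine sup_induction (p := fun T : L => ∀ g : G, RS.σ g ≤ T → χ g = 1) ?_ ?_ ?_ g hg
  · intro g hg
    rw [(RS.supp_zero g).mp (le_bot_iff.mp hg), AddChar.map_zero_eq_one]
  · intro S₁ h₁ S₂ h₂ g hg
    obtain ⟨a, ha, b, hb, rfl⟩ : g ∈ {g | RS.σ g ≤ S₁} + {g | RS.σ g ≤ S₂} := by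
      rw [← RS.supp_sup]
      exact hg
    rw [AddChar.map_add_eq_mul, h₁ a ha, h₂ b hb, mul_one]
  · intro T hT
    exact (mem_filter.mp hT).2

theorem le_dualSupp_iff (χ : AddChar G ℂˣ) (T : L) :
    T ≤ RS.dualSupp χ ↔ ∀ g ∈ RS.suppSubgroup T, χ g = 1 :=
  ⟨fun h _ hg => RS.eq_one_of_σ_le_dualSupp χ (le_trans hg h),
    fun h => le_sup (f := id) (mem_filter.mpr ⟨mem_univ T, h⟩)⟩

theorem card_le_dualSupp (T : L) :
    Nat.card {χ : AddChar G ℂˣ // T ≤ RS.dualSupp χ} = (RS.suppSubgroup T).index := by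
  simp only [le_dualSupp_iff]
  exact AddChar.card_annihilator _

theorem index_suppSubgroup (T : L) :
    (RS.suppSubgroup T).index = Nat.card G / RS.γ (RL.ρ T) := by
  rw [← card_suppSubgroup]
  exact (Nat.div_eq_of_eq_mul_right Nat.card_pos (RS.suppSubgroup T).card_mul_index.symm).symm

theorem card_inf_mul_card_le_dualSupp (C : AddSubgroup G) (T : L) :
    Nat.card {g : G // g ∈ C ∧ RS.σ g ≤ T} * Nat.card {χ : AddChar G ℂˣ // T ≤ RS.dualSupp χ}
      = Nat.card C * Nat.card {χ : AddChar G ℂˣ // (∀ g ∈ C, χ g = 1) ∧ T ≤ RS.dualSupp χ} := by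
  simp only [le_dualSupp_iff]
  exact AddChar.card_inf_mul_card_annihilator C (RS.suppSubgroup T)

end RegularSupport

theorem stmt_14_general {L : Type*} [Lattice L] [BoundedOrder L] [Fintype L]
    {G : Type*} [AddCommGroup G] [Fintype G] {RL : RegularLattice L}
    (RS : RegularSupport L G RL) (C : AddSubgroup G)
    (s : ℕ) (S : L) (hS : RL.ρ S = s) :
    ∑ i ∈ Finset.range (s + 1),
        (Nat.card {g : G // g ∈ C ∧ RL.ρ (RS.σ g) = i} : ℚ) * (RL.muGE s i : ℚ)
      = (Nat.card C : ℚ) / (Nat.card {χ : AddChar G ℂˣ // S ≤ RS.dualSupp χ} : ℚ)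
          * ∑ j ∈ Finset.range (RL.r - s + 1),
              (Nat.card {χ : AddChar G ℂˣ //
                  (∀ g ∈ C, χ g = 1) ∧ RL.r - RL.ρ (RS.dualSupp χ) = j} : ℚ)
                * (RL.muLE s (RL.r - j) : ℚ) := by
  have : Fintype (AddChar G ℂˣ) := Fintype.ofFinite _
  set D := Nat.card {χ : AddChar G ℂˣ // S ≤ RS.dualSupp χ} with hD_def
  have hD : ∀ T : L, RL.ρ T = s → Nat.card {χ : AddChar G ℂˣ // T ≤ RS.dualSupp χ} = D :=
    fun T hT => by simp only [D, RS.card_le_dualSupp, RS.index_suppSubgroup, hT, hS]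
  have hD0 : (D : ℚ) ≠ 0 := by
    rw [hD_def, RS.card_le_dualSupp]
    exact_mod_cast AddSubgroup.index_ne_zero_of_finite
  have key :
      (∑ i ∈ range (s + 1), Nat.card {g : G // g ∈ C ∧ RL.ρ (RS.σ g) = i} * RL.muGE s i) * D
      = Nat.card C * ∑ j ∈ range (RL.r - s + 1),
          Nat.card {χ : AddChar G ℂˣ // (∀ g ∈ C, χ g = 1) ∧ RL.r - RL.ρ (RS.dualSupp χ) = j}
            * RL.muLE s (RL.r - j) := by
    rw [RL.sum_range_card_mul_muGE, RL.sum_range_card_mul_muLE, sum_mul, mul_sum]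
    refine sum_congr rfl fun T hT => ?_
    rw [← hD T (mem_filter.mp hT).2]
    exact RS.card_inf_mul_card_le_dualSupp C T
  rw [div_mul_eq_mul_div, eq_div_iff hD0]
  exact_mod_cast key

/-- **Implicit MacWilliams identities.** For every code `C ⊆ G` and every `0 ≤ s ≤ r`,
`Σ_{i=0}^s W_i(C, ω_σ) μ_≥(s,i) = (|C| / γ_{σ*}(r−s)) Σ_{j=0}^{r−s} W_j(C*, ω_{σ*}) μ_≤(s, r−j)`.
Here `γ_{σ*}(r−s) = |Ĝ_{σ*}(S)|` for any `S` with `ρ(S) = s`,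
`ω_σ(g) = ρ(σ(g))` and `ω_{σ*}(χ) = r − ρ(σ*(χ))`. -/
theorem stmt_14 {L : Type*} [Lattice L] [BoundedOrder L] [Fintype L]
    {G : Type*} [AddCommGroup G] [Fintype G] {RL : RegularLattice L}
    (RS : RegularSupport L G RL) (C : AddSubgroup G)
    (s : ℕ) (hs : s ≤ RL.r) (S : L) (hS : RL.ρ S = s) :
    ∑ i ∈ Finset.range (s + 1),
        (Nat.card {g : G // g ∈ C ∧ RL.ρ (RS.σ g) = i} : ℚ) * (RL.muGE s i : ℚ)
      = (Nat.card C : ℚ) / (Nat.card {χ : AddChar G ℂˣ // S ≤ RS.dualSupp χ} : ℚ)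
          * ∑ j ∈ Finset.range (RL.r - s + 1),
              (Nat.card {χ : AddChar G ℂˣ //
                  (∀ g ∈ C, χ g = 1) ∧ RL.r - RL.ρ (RS.dualSupp χ) = j} : ℚ)
                * (RL.muLE s (RL.r - j) : ℚ) :=
  stmt_14_general RS C s S hS
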